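/- arXiv:1712.01595 — 2 statements merged into one kernel-verified Lean document; each statement's English description precedes it below -/
import Mathlib

section
/- Let Ω ⊂ ℝ² be an open bounded set and let P₁, P₂ ∈ L^∞(Ω), extended by zero outside Ω. Define T̃₁₁(x,y) = −∫₀^x P₁(ξ,y) dξ, T̃₂₂(x,y) = −∫₀^y P₂(x,ξ) dξ, and T̃₁₂ = T̃₂₁ = 0 on Ω. Then T̃ = {T̃_{αβ}} is a symmetric, essentially bounded matrix field on Ω satisfying the distributional divergence identity T̃_{αβ,β} = −P_α in Ω (α ∈ {1,2}), and there exists C > 0 such that T_{αβ} := T̃_{αβ} + C δ_{αβ} is uniformly positive definite almost everywhere in Ω while still satisfying T_{αβ,β} = −P_α in Ω, where δ_{αβ} is the Kronecker delta. -/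
open MeasureTheory Filter Topology

noncomputable section

/-- The two coordinate directions in `ℝ²`. -/
def dir : Fin 2 → ℝ × ℝ := ![(1, 0), (0, 1)]

/-- Partial derivative of `f` in the `i`-th coordinate direction. -/
def pd (f : ℝ × ℝ → ℝ) (i : Fin 2) (x : ℝ × ℝ) : ℝ :=
  fderiv ℝ f x (dir i)

/-- Second partial derivative `f_{,ij}`. -/
def pd2 (f : ℝ × ℝ → ℝ) (i j : Fin 2) (x : ℝ × ℝ) : ℝ :=
  pd (fun y => pd f i y) j x

/-- A plate displacement field `u = (u₁,u₂,w)`. -/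
abbrev Config : Type := (Fin 2 → ℝ × ℝ → ℝ) × (ℝ × ℝ → ℝ)

/-- Membrane strain tensor `γ_{αβ}(u) = (u_{α,β}+u_{β,α})/2 + w_{,α} w_{,β}/2`. -/
def gam (u : Config) (α β : Fin 2) (x : ℝ × ℝ) : ℝ :=
  (pd (u.1 α) β x + pd (u.1 β) α x) / 2 + pd u.2 α x * pd u.2 β x / 2

/-- Curvature-change tensor `κ_{αβ}(u) = -w_{,αβ}`. -/
def kap (u : Config) (α β : Fin 2) (x : ℝ × ℝ) : ℝ := - pd2 u.2 α β x

/-- A constant fourth-order tensor on `ℝ²`. -/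
abbrev Tensor4 := Fin 2 → Fin 2 → Fin 2 → Fin 2 → ℝ

/-- `H` is symmetric and positive definite as a fourth order tensor. -/
def SymPosDef (H : Tensor4) : Prop :=
  (∀ α β l m, H α β l m = H β α l m ∧ H α β l m = H l m α β) ∧
  ∃ c > 0, ∀ t : Fin 2 → Fin 2 → ℝ,
    c * (∑ α, ∑ β, (t α β) ^ 2) ≤ ∑ α, ∑ β, ∑ l, ∑ m, H α β l m * t α β * t l m

/-- Membrane energy `G₁(γ(u)) = (1/2)∫_Ω H_{αβλμ} γ_{αβ}(u) γ_{λμ}(u) dx`. -/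
def G1 (H : Tensor4) (Ω : Set (ℝ × ℝ)) (u : Config) : ℝ :=
  (1 / 2) * ∫ x in Ω, ∑ α, ∑ β, ∑ l, ∑ m, H α β l m * gam u α β x * gam u l m x

/-- Bending energy `G₂(κ(u)) = (1/2)∫_Ω h_{αβλμ} κ_{αβ}(u) κ_{λμ}(u) dx`. -/
def G2 (ht : Tensor4) (Ω : Set (ℝ × ℝ)) (u : Config) : ℝ :=
  (1 / 2) * ∫ x in Ω, ∑ α, ∑ β, ∑ l, ∑ m, ht α β l m * kap u α β x * kap u l m x

/-- Admissible displacements for the clamped plate: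
`U = W₀^{1,2}(Ω;ℝ²) × W₀^{2,2}(Ω)`, i.e. `u_α = w = ∂w/∂n = 0` on `∂Ω`. -/
def Uad (Ω : Set (ℝ × ℝ)) : Set Config :=
  {u | (∀ α, ContDiff ℝ 1 (u.1 α)) ∧ ContDiff ℝ 2 u.2 ∧
       (∀ α, ∀ x ∈ frontier Ω, u.1 α x = 0) ∧
       (∀ x ∈ frontier Ω, u.2 x = 0) ∧
       (∀ x ∈ frontier Ω, fderiv ℝ u.2 x = 0)}

/-- The total potential energy
`J(u) = G₁(γ(u)) + G₂(κ(u)) - ⟨w,P⟩_{L²} - ⟨u_α,P_α⟩_{L²}`. -/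
def Jfun (H ht : Tensor4) (Ω : Set (ℝ × ℝ)) (P : Fin 2 → ℝ × ℝ → ℝ) (P3 : ℝ × ℝ → ℝ)
    (u : Config) : ℝ :=
  G1 H Ω u + G2 ht Ω u - (∫ x in Ω, u.2 x * P3 x) - ∑ α, ∫ x in Ω, u.1 α x * P α x

/-- `φ` is a smooth test function compactly supported in `Ω`. -/
def TestFun (Ω : Set (ℝ × ℝ)) (φ : ℝ × ℝ → ℝ) : Prop :=
  ContDiff ℝ (⊤ : ℕ∞) φ ∧ HasCompactSupport φ ∧ tsupport φ ⊆ Ω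

/-- Membership in `L²(Ω;ℝ²)`. -/
def L2vec (Ω : Set (ℝ × ℝ)) (z : Fin 2 → ℝ × ℝ → ℝ) : Prop :=
  ∀ α, MemLp (z α) 2 (volume.restrict Ω)

/-- Membership in `L²(Ω;ℝ^{2×2})`. -/
def L2mat (Ω : Set (ℝ × ℝ)) (N : Fin 2 → Fin 2 → ℝ × ℝ → ℝ) : Prop :=
  ∀ α β, MemLp (N α β) 2 (volume.restrict Ω)

/-!
On almost every horizontal line the primitive `x ↦ ∫₀ˣ P₁(ξ, y) dξ` of a bounded function is
absolutely continuous with derivative `P₁(·, y)` a.e., so integrating by parts on each line and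
applying Fubini gives `∫ T̃₁₁ φ_{,1} = ∫ P₁ φ`; `T̃₂₂` is the same construction after swapping the
coordinates. The primitives grow at most like `‖P‖_∞ |x|`, hence are bounded on the bounded set
`Ω`, by `K` say. Adding `C = 2K + 1` times the identity then makes the quadratic form at least
`|ξ|²`, and does not affect the divergence identity since `∫ φ_{,α} = 0`.
-/

open Set
open scoped Interval

theorem integral_primitive_mul_deriv {g : ℝ → ℝ} (hg : LocallyIntegrable g volume)
    {φ : ℝ → ℝ} (hφ : ContDiff ℝ 1 φ) (hcs : HasCompactSupport φ) :
    ∫ x, (∫ ξ in (0 : ℝ)..x, g ξ) * deriv φ x = -∫ x, g x * φ x := by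
  set F : ℝ → ℝ := fun x => ∫ ξ in (0 : ℝ)..x, g ξ
  obtain ⟨r, hr⟩ := hcs.isBounded.subset_closedBall 0
  set R := |r| + 1
  have hR : 0 < R := by positivity
  have hout : ∀ x, R ≤ |x| → x ∉ tsupport φ := fun x hx hsupp => by
    have := hr hsupp
    rw [Metric.mem_closedBall, Real.dist_eq, sub_zero] at this
    linarith [le_abs_self r]
  have hsub : ∀ f : ℝ → ℝ, (∀ x ∉ tsupport φ, f x = 0) → Function.support f ⊆ Ioc (-R) R :=
    fun f hf x hx => Ioo_subset_Ioc_self (abs_lt.1 (not_le.1 fun h => hx (hf x (hout x h))))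
  have hφ_neg : φ (-R) = 0 :=
    image_eq_zero_of_notMem_tsupport (hout _ (by rw [abs_neg]; exact le_abs_self R))
  have hφ_pos : φ R = 0 := image_eq_zero_of_notMem_tsupport (hout _ (le_abs_self R))
  have hFac : AbsolutelyContinuousOnInterval F (-R) R :=
    (intervalIntegrable_iff.2 ((hg.integrableOn_isCompact isCompact_uIcc).mono_set
      uIoc_subset_uIcc)).absolutelyContinuousOnInterval_intervalIntegral
      (by rw [uIcc_of_le (by linarith)]; constructor <;> linarith)
  have hφac : AbsolutelyContinuousOnInterval φ (-R) R :=
    hφ.contDiffOn.absolutelyContinuousOnInterval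
  have hderiv : ∀ᵐ x, deriv F x = g x := by
    filter_upwards [LocallyIntegrable.ae_hasDerivAt_integral hg] with x hx using (hx 0).deriv
  calc ∫ x, F x * deriv φ x
      = ∫ x in -R..R, F x * deriv φ x := by
        refine (intervalIntegral.integral_eq_integral_of_support_subset
          (hsub _ fun x hx => ?_)).symm
        rw [image_eq_zero_of_notMem_tsupport (fun h => hx (tsupport_deriv_subset h)), mul_zero]
    _ = -∫ x in -R..R, deriv F x * φ x := by
        rw [hFac.integral_mul_deriv_eq_deriv_mul hφac, hφ_neg, hφ_pos]
        ring
    _ = -∫ x in -R..R, g x * φ x := by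
        congr 1
        refine intervalIntegral.integral_congr_ae ?_
        filter_upwards [hderiv] with x hx _ using by rw [hx]
    _ = -∫ x, g x * φ x := by
        rw [intervalIntegral.integral_eq_integral_of_support_subset (hsub _ fun x hx => by
          rw [image_eq_zero_of_notMem_tsupport hx, mul_zero])]

def primitiveFst (Q : ℝ × ℝ → ℝ) (p : ℝ × ℝ) : ℝ := ∫ ξ in (0 : ℝ)..p.1, Q (ξ, p.2)

theorem ae_norm_primitiveFst_le {Q : ℝ × ℝ → ℝ} {M : ℝ} (hM : ∀ᵐ p, ‖Q p‖ ≤ M) :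
    ∀ᵐ p, ‖primitiveFst Q p‖ ≤ M * |p.1| := by
  have hslice : ∀ᵐ y, ∀ᵐ x, ‖Q (x, y)‖ ≤ M :=
    Measure.ae_ae_of_ae_prod (Measure.measurePreserving_swap.quasiMeasurePreserving.ae hM)
  filter_upwards [Measure.quasiMeasurePreserving_snd.ae hslice] with p hp
  simpa [primitiveFst] using intervalIntegral.norm_integral_le_of_norm_le_const_ae
    (a := 0) (b := p.1) (hp.mono fun x hx _ => hx)

theorem aestronglyMeasurable_primitiveFst {Q : ℝ × ℝ → ℝ}
    (hQ : AEStronglyMeasurable Q volume) : AEStronglyMeasurable (primitiveFst Q) volume := by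
  have hS : MeasurableSet {z : (ℝ × ℝ) × ℝ | z.2 ∈ Ι 0 z.1.1} := by
    simp only [uIoc, mem_Ioc, ofPred_and]
    exact (measurableSet_lt (by fun_prop) (by fun_prop)).inter
      (measurableSet_le (by fun_prop) (by fun_prop))
  have hQ' : AEStronglyMeasurable (fun z : (ℝ × ℝ) × ℝ => Q (z.2, z.1.2))
      ((volume : Measure (ℝ × ℝ)).prod volume) :=
    hQ.comp_quasiMeasurePreserving (Measure.measurePreserving_swap.quasiMeasurePreserving.comp
      (QuasiMeasurePreserving.prodMap Measure.quasiMeasurePreserving_snd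
        (Measure.QuasiMeasurePreserving.id volume)))
  have hsign : Measurable fun p : ℝ × ℝ => if (0 : ℝ) ≤ p.1 then (1 : ℝ) else -1 :=
    Measurable.ite (measurableSet_le measurable_const measurable_fst) measurable_const
      measurable_const
  refine (hsign.aestronglyMeasurable.mul (hQ'.indicator hS).integral_prod_right').congr
    (.of_forall fun p => ?_)
  rw [primitiveFst, intervalIntegral.intervalIntegral_eq_integral_uIoc,
    ← integral_indicator measurableSet_uIoc]
  rfl

theorem pd_eq_zero_of_notMem_tsupport {φ : ℝ × ℝ → ℝ} {x : ℝ × ℝ} (hx : x ∉ tsupport φ)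
    (i : Fin 2) : pd φ i x = 0 := by
  simp [pd, fderiv_of_notMem_tsupport ℝ hx]

theorem continuous_pd {φ : ℝ × ℝ → ℝ} (hφ : ContDiff ℝ 1 φ) (i : Fin 2) :
    Continuous (pd φ i) :=
  (hφ.continuous_fderiv one_ne_zero).clm_apply continuous_const

theorem HasCompactSupport.pd {φ : ℝ × ℝ → ℝ} (hφ : HasCompactSupport φ) (i : Fin 2) :
    HasCompactSupport (pd φ i) :=
  hφ.fderiv_apply (𝕜 := ℝ) _

theorem pd_zero_eq_deriv {φ : ℝ × ℝ → ℝ} {x y : ℝ} (hφ : DifferentiableAt ℝ φ (x, y)) :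
    pd φ 0 (x, y) = deriv (fun t => φ (t, y)) x := by
  have h := hφ.hasFDerivAt.comp_hasDerivAt x ((hasDerivAt_id' x).prodMk (hasDerivAt_const x y))
  rw [show (fun t => φ (t, y)) = φ ∘ fun t => (t, y) from rfl, h.deriv]
  simp [pd, dir]

theorem pd_comp_swap (φ : ℝ × ℝ → ℝ) (p : ℝ × ℝ) :
    pd (φ ∘ Prod.swap) 0 p = pd φ 1 p.swap := by
  have := (ContinuousLinearEquiv.prodComm ℝ ℝ ℝ).comp_right_fderiv (f := φ) (x := p)
  simp only [pd, dir]
  rw [show φ ∘ Prod.swap = φ ∘ (ContinuousLinearEquiv.prodComm ℝ ℝ ℝ) from rfl, this]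
  simp

theorem HasCompactSupport.comp_prodMk_const {φ : ℝ × ℝ → ℝ} (hφ : HasCompactSupport φ)
    (y : ℝ) : HasCompactSupport fun t => φ (t, y) :=
  .intro (hφ.image continuous_fst) fun _ ht =>
    image_eq_zero_of_notMem_tsupport fun h => ht ⟨_, h, rfl⟩

theorem ae_locallyIntegrable_slice {Q : ℝ × ℝ → ℝ} (hQ : MemLp Q ⊤ volume) :
    ∀ᵐ y, LocallyIntegrable (fun x => Q (x, y)) volume := by
  have hbound : ∀ᵐ y, ∀ᵐ x, ‖Q (x, y)‖ ≤ lpNorm Q ⊤ volume :=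
    Measure.ae_ae_of_ae_prod (Measure.measurePreserving_swap.quasiMeasurePreserving.ae
      (ae_le_lpNorm_exponent_top hQ))
  filter_upwards [hQ.1.prodMk_right, hbound] with y hmeas hy
  exact (memLp_top_of_bound hmeas _ hy).locallyIntegrable le_top

theorem integrable_primitiveFst_mul {Q : ℝ × ℝ → ℝ} (hQ : MemLp Q ⊤ volume)
    {ψ : ℝ × ℝ → ℝ} (hψ : Continuous ψ) (hψc : HasCompactSupport ψ) :
    Integrable (fun p => primitiveFst Q p * ψ p) volume := by
  obtain ⟨r, hr⟩ := hψc.isBounded.subset_closedBall 0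
  refine (integrableOn_iff_integrable_of_support_subset fun p hp => subset_tsupport ψ
    (right_ne_zero_of_mul hp)).1 ?_
  refine (hψ.integrable_of_hasCompactSupport hψc).integrableOn.bdd_mul
    (aestronglyMeasurable_primitiveFst hQ.1).restrict (c := lpNorm Q ⊤ volume * r) ?_
  filter_upwards [ae_restrict_of_ae (ae_norm_primitiveFst_le (ae_le_lpNorm_exponent_top hQ)),
    ae_restrict_mem (isClosed_tsupport ψ).measurableSet] with p hp hpK
  refine hp.trans (mul_le_mul_of_nonneg_left ?_ lpNorm_nonneg)
  have := hr hpK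
  rw [Metric.mem_closedBall, dist_zero_right] at this
  exact (norm_fst_le p).trans this

theorem integral_primitiveFst_mul_pd {Q : ℝ × ℝ → ℝ} (hQ : MemLp Q ⊤ volume)
    {φ : ℝ × ℝ → ℝ} (hφ : ContDiff ℝ 1 φ) (hcs : HasCompactSupport φ) :
    ∫ p, primitiveFst Q p * pd φ 0 p = -∫ p, Q p * φ p := by
  have hint : Integrable (fun p => primitiveFst Q p * pd φ 0 p) volume :=
    integrable_primitiveFst_mul hQ (continuous_pd hφ 0) (hcs.pd 0)
  have hQφ : Integrable (fun p => Q p * φ p) volume :=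
    (hφ.continuous.integrable_of_hasCompactSupport hcs).mul_of_top_right hQ
  have hslice : ∀ᵐ y,
      ∫ x, primitiveFst Q (x, y) * pd φ 0 (x, y) = -∫ x, Q (x, y) * φ (x, y) := by
    filter_upwards [ae_locallyIntegrable_slice hQ] with y hy
    simp only [pd_zero_eq_deriv (hφ.differentiable one_ne_zero _)]
    exact integral_primitive_mul_deriv hy (hφ.comp (contDiff_id.prodMk contDiff_const))
      (hcs.comp_prodMk_const y)
  rw [Measure.volume_eq_prod] at hint hQφ ⊢
  rw [integral_prod_symm _ hint, integral_congr_ae hslice, integral_neg,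
    ← integral_prod_symm _ hQφ]

theorem integral_primitiveFst_swap_mul_pd {Q : ℝ × ℝ → ℝ} (hQ : MemLp Q ⊤ volume)
    {φ : ℝ × ℝ → ℝ} (hφ : ContDiff ℝ 1 φ) (hcs : HasCompactSupport φ) :
    ∫ p, primitiveFst (Q ∘ Prod.swap) p.swap * pd φ 1 p = -∫ p, Q p * φ p := calc
  _ = ∫ p, primitiveFst (Q ∘ Prod.swap) p * pd (φ ∘ Prod.swap) 0 p := by
    simp only [pd_comp_swap]
    exact integral_prod_swap (fun p => primitiveFst (Q ∘ Prod.swap) p * pd φ 1 p.swap)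
  _ = -∫ p : ℝ × ℝ, Q p.swap * φ p.swap :=
    integral_primitiveFst_mul_pd (hQ.comp_measurePreserving Measure.measurePreserving_swap)
      (hφ.comp (contDiff_snd.prodMk contDiff_fst) : ContDiff ℝ 1 (φ ∘ Prod.swap))
      (hcs.comp_homeomorph (Homeomorph.prodComm ℝ ℝ))
  _ = -∫ p, Q p * φ p := congrArg Neg.neg (integral_prod_swap fun p => Q p * φ p)

theorem integral_pd_eq_zero {φ : ℝ × ℝ → ℝ} (hφ : ContDiff ℝ 1 φ)
    (hcs : HasCompactSupport φ) (i : Fin 2) : ∫ x, pd φ i x = 0 := by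
  have hpd : Integrable (pd φ i) volume :=
    (continuous_pd hφ i).integrable_of_hasCompactSupport (hcs.pd i)
  have := integral_mul_fderiv_eq_neg_fderiv_mul_of_integrable (f := fun _ => (1 : ℝ)) (g := φ)
    (v := dir i) (μ := volume) (by simp) (hpd.const_mul 1)
    (by simpa using hφ.continuous.integrable_of_hasCompactSupport hcs)
    (fun _ _ => differentiableAt_const _) (fun x _ => hφ.differentiable one_ne_zero x)
  simpa [pd] using this

/-- The indices `0, 1` are the paper's `1, 2`; `T̃₂₂(x, y) = -∫₀^y P₂(x, ξ) dξ` is the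
first-coordinate primitive of `P₂ ∘ swap`, evaluated at `(y, x)`. -/
def primitiveTensor (P : Fin 2 → ℝ × ℝ → ℝ) : Fin 2 → Fin 2 → ℝ × ℝ → ℝ :=
  ![![fun p => -primitiveFst (P 0) p, 0], ![0, fun p => -primitiveFst (P 1 ∘ Prod.swap) p.swap] ]

/-- `T_{αβ,β} = -P_α` in the sense of distributions on `Ω`. -/
def WeakDivergenceEq (Ω : Set (ℝ × ℝ)) (T : Fin 2 → Fin 2 → ℝ × ℝ → ℝ)
    (P : Fin 2 → ℝ × ℝ → ℝ) : Prop :=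
  ∀ α, ∀ φ : ℝ × ℝ → ℝ, TestFun Ω φ →
    (∫ x in Ω, ∑ β, T α β x * pd φ β x) = ∫ x in Ω, P α x * φ x

theorem primitiveTensor_symm (P : Fin 2 → ℝ × ℝ → ℝ) (α β : Fin 2) (p : ℝ × ℝ) :
    primitiveTensor P α β p = primitiveTensor P β α p := by
  fin_cases α <;> fin_cases β <;> rfl

section primitiveTensor

variable {P : Fin 2 → ℝ × ℝ → ℝ}

theorem aestronglyMeasurable_primitiveTensor (hP : ∀ α, AEStronglyMeasurable (P α) volume)
    (α β : Fin 2) : AEStronglyMeasurable (primitiveTensor P α β) volume := by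
  fin_cases α <;> fin_cases β
  · exact (aestronglyMeasurable_primitiveFst (hP 0)).neg
  · exact aestronglyMeasurable_const
  · exact aestronglyMeasurable_const
  · exact ((aestronglyMeasurable_primitiveFst ((hP 1).comp_measurePreserving
      Measure.measurePreserving_swap)).comp_measurePreserving Measure.measurePreserving_swap).neg

theorem ae_abs_primitiveTensor_le (hP : ∀ α, MemLp (P α) ⊤ volume) :
    ∀ᵐ p : ℝ × ℝ, ∀ α β,
      |primitiveTensor P α β p| ≤ (lpNorm (P 0) ⊤ volume + lpNorm (P 1) ⊤ volume) * ‖p‖ := by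
  have hswap : MeasurePreserving Prod.swap (volume : Measure (ℝ × ℝ)) volume :=
    Measure.measurePreserving_swap
  have h0 := ae_norm_primitiveFst_le (ae_le_lpNorm_exponent_top (hP 0))
  have h1 := hswap.quasiMeasurePreserving.ae <| ae_norm_primitiveFst_le
    (hswap.quasiMeasurePreserving.ae (ae_le_lpNorm_exponent_top (hP 1)))
  filter_upwards [h0, h1] with p hp0 hp1 α β
  have hM0 : (0 : ℝ) ≤ lpNorm (P 0) ⊤ volume := lpNorm_nonneg
  have hM1 : (0 : ℝ) ≤ lpNorm (P 1) ⊤ volume := lpNorm_nonneg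
  fin_cases α <;> fin_cases β <;> simp only [primitiveTensor] <;> norm_num
  · rw [← Real.norm_eq_abs]
    exact hp0.trans (mul_le_mul (by linarith) (norm_fst_le p) (abs_nonneg _) (by positivity))
  · positivity
  · positivity
  · rw [← Real.norm_eq_abs]
    exact hp1.trans (mul_le_mul (by linarith) (norm_snd_le p) (abs_nonneg _) (by positivity))

theorem exists_ae_restrict_abs_primitiveTensor_le (hP : ∀ α, MemLp (P α) ⊤ volume)
    {Ω : Set (ℝ × ℝ)} (hΩ : Bornology.IsBounded Ω) :
    ∃ K, 0 ≤ K ∧ ∀ᵐ p ∂volume.restrict Ω, ∀ α β, |primitiveTensor P α β p| ≤ K := by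
  obtain ⟨r, hr⟩ := hΩ.subset_closedBall 0
  have hM : 0 ≤ lpNorm (P 0) ⊤ volume + lpNorm (P 1) ⊤ volume :=
    add_nonneg lpNorm_nonneg lpNorm_nonneg
  refine ⟨_ * |r|, mul_nonneg hM (abs_nonneg r), ?_⟩
  filter_upwards [ae_restrict_of_ae (ae_abs_primitiveTensor_le hP),
    ae_restrict_of_ae_restrict_of_subset hr (ae_restrict_mem measurableSet_closedBall)]
    with p hp hpr α β
  refine (hp α β).trans (mul_le_mul_of_nonneg_left ?_ hM)
  rw [Metric.mem_closedBall, dist_zero_right] at hpr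
  exact hpr.trans (le_abs_self r)

theorem weakDivergenceEq_primitiveTensor (hP : ∀ α, MemLp (P α) ⊤ volume) (Ω : Set (ℝ × ℝ)) :
    WeakDivergenceEq Ω (primitiveTensor P) P := by
  intro α φ ⟨hφ, hcs, hφΩ⟩
  have hφ1 : ContDiff ℝ 1 φ := hφ.of_le (by exact_mod_cast le_top)
  rw [setIntegral_eq_integral_of_forall_compl_eq_zero fun x hx => by
      simp [pd_eq_zero_of_notMem_tsupport (fun h => hx (hφΩ h))],
    setIntegral_eq_integral_of_forall_compl_eq_zero fun x hx => by
      simp [image_eq_zero_of_notMem_tsupport (fun h => hx (hφΩ h))] ]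
  fin_cases α
  · simp [primitiveTensor, Fin.sum_univ_two, integral_neg,
      integral_primitiveFst_mul_pd (hP 0) hφ1 hcs]
  · simp [primitiveTensor, Fin.sum_univ_two, integral_neg,
      integral_primitiveFst_swap_mul_pd (hP 1) hφ1 hcs]

end primitiveTensor

theorem WeakDivergenceEq.add_const_id {Ω : Set (ℝ × ℝ)} {T : Fin 2 → Fin 2 → ℝ × ℝ → ℝ}
    {P : Fin 2 → ℝ × ℝ → ℝ} (h : WeakDivergenceEq Ω T P)
    (hT : ∀ α β, MemLp (T α β) ⊤ (volume.restrict Ω)) (C : ℝ) :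
    WeakDivergenceEq Ω (fun α β x => T α β x + if α = β then C else 0) P := by
  intro α φ ⟨hφ, hcs, hφΩ⟩
  have hφ1 : ContDiff ℝ 1 φ := hφ.of_le (by exact_mod_cast le_top)
  have hpd : ∀ β, Integrable (pd φ β) volume := fun β =>
    (continuous_pd hφ1 β).integrable_of_hasCompactSupport (hcs.pd β)
  have hTpd : IntegrableOn (fun x => ∑ β, T α β x * pd φ β x) Ω volume :=
    integrable_finsetSum _ fun β _ => (hpd β).integrableOn.mul_of_top_right (hT α β)
  have hsplit : ∀ x, ∑ β, (T α β x + if α = β then C else 0) * pd φ β x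
      = ∑ β, T α β x * pd φ β x + C * pd φ α x := by
    intro x
    simp [add_mul, Finset.sum_add_distrib, ite_mul]
  simp only [hsplit]
  rw [integral_add hTpd ((hpd α).integrableOn.const_mul C), integral_const_mul,
    setIntegral_eq_integral_of_forall_compl_eq_zero fun x hx =>
      pd_eq_zero_of_notMem_tsupport (fun h => hx (hφΩ h)) α,
    integral_pd_eq_zero hφ1 hcs, mul_zero, add_zero]
  exact h α φ ⟨hφ, hcs, hφΩ⟩

theorem sq_add_sq_le_sum_add_diag_mul_mul {t : Fin 2 → Fin 2 → ℝ} {K : ℝ}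
    (ht : ∀ α β, |t α β| ≤ K) (ξ : Fin 2 → ℝ) :
    ξ 0 ^ 2 + ξ 1 ^ 2 ≤ ∑ α, ∑ β, (t α β + if α = β then 2 * K + 1 else 0) * ξ α * ξ β := by
  have h00 := neg_le_of_abs_le (ht 0 0)
  have h11 := neg_le_of_abs_le (ht 1 1)
  have hoff : -(2 * K) * |ξ 0 * ξ 1| ≤ (t 0 1 + t 1 0) * (ξ 0 * ξ 1) := by
    have : |(t 0 1 + t 1 0) * (ξ 0 * ξ 1)| ≤ 2 * K * |ξ 0 * ξ 1| := by
      rw [abs_mul]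
      exact mul_le_mul_of_nonneg_right ((abs_add_le _ _).trans (by linarith [ht 0 1, ht 1 0]))
        (abs_nonneg _)
    linarith [neg_abs_le ((t 0 1 + t 1 0) * (ξ 0 * ξ 1))]
  have hamgm : 2 * |ξ 0 * ξ 1| ≤ ξ 0 ^ 2 + ξ 1 ^ 2 := by
    simpa [abs_mul, sq_abs, mul_assoc] using two_mul_le_add_sq |ξ 0| |ξ 1|
  simp only [Fin.sum_univ_two, if_pos, Fin.zero_ne_one, Fin.one_eq_zero_iff, if_false,
    OfNat.ofNat_ne_one]
  nlinarith [mul_le_mul_of_nonneg_right h00 (sq_nonneg (ξ 0)),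
    mul_le_mul_of_nonneg_right h11 (sq_nonneg (ξ 1)), abs_nonneg (ξ 0 * ξ 1),
    (abs_nonneg (t 0 0)).trans (ht 0 0)]

theorem statement1_general
    (Ω : Set (ℝ × ℝ)) (hΩb : Bornology.IsBounded Ω)
    (P : Fin 2 → ℝ × ℝ → ℝ)
    (hPbd : ∀ α, MemLp (P α) ⊤ volume)
    (Ttil : Fin 2 → Fin 2 → ℝ × ℝ → ℝ)
    (hT11 : ∀ p : ℝ × ℝ, Ttil 0 0 p = -∫ ξ in (0 : ℝ)..p.1, P 0 (ξ, p.2))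
    (hT22 : ∀ p : ℝ × ℝ, Ttil 1 1 p = -∫ ξ in (0 : ℝ)..p.2, P 1 (p.1, ξ))
    (hT12 : ∀ p : ℝ × ℝ, Ttil 0 1 p = 0)
    (hT21 : ∀ p : ℝ × ℝ, Ttil 1 0 p = 0) :
    -- `T̃` is symmetric
    (∀ α β, ∀ x, Ttil α β x = Ttil β α x) ∧
    -- `T̃` is essentially bounded on `Ω`
    (∀ α β, MemLp (Ttil α β) ⊤ (volume.restrict Ω)) ∧
    -- distributional divergence identity `T̃_{αβ,β} = -P_α` in `Ω`:
    -- `∫_Ω T̃_{αβ} φ_{,β} dx = ∫_Ω P_α φ dx` for all test functions `φ`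
    (∀ α, ∀ φ : ℝ × ℝ → ℝ, TestFun Ω φ →
      (∫ x in Ω, ∑ β, Ttil α β x * pd φ β x) = ∫ x in Ω, P α x * φ x) ∧
    -- a large constant shift makes it uniformly positive definite a.e. in `Ω`,
    -- while the shifted tensor satisfies the same divergence identity
    (∃ C > (0 : ℝ), ∃ c > (0 : ℝ),
      (∀ᵐ x ∂volume.restrict Ω, ∀ ξ : Fin 2 → ℝ,
        c * (ξ 0 ^ 2 + ξ 1 ^ 2) ≤
          ∑ α, ∑ β, (Ttil α β x + (if α = β then C else 0)) * ξ α * ξ β) ∧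
      (∀ α, ∀ φ : ℝ × ℝ → ℝ, TestFun Ω φ →
        (∫ x in Ω, ∑ β, (Ttil α β x + (if α = β then C else 0)) * pd φ β x) =
          ∫ x in Ω, P α x * φ x)) := by
  obtain rfl : Ttil = primitiveTensor P := by
    ext α β p
    fin_cases α <;> fin_cases β
    exacts [hT11 p, hT12 p, hT21 p, hT22 p]
  obtain ⟨K, hK0, hK⟩ := exists_ae_restrict_abs_primitiveTensor_le hPbd hΩb
  have hLinf : ∀ α β, MemLp (primitiveTensor P α β) ⊤ (volume.restrict Ω) := fun α β =>
    memLp_top_of_bound (aestronglyMeasurable_primitiveTensor (fun α => (hPbd α).1) α β).restrict K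
      (hK.mono fun p hp => hp α β)
  have hdiv := weakDivergenceEq_primitiveTensor hPbd Ω
  refine ⟨primitiveTensor_symm P, hLinf, hdiv, 2 * K + 1, by positivity, 1, one_pos, ?_,
    hdiv.add_const_id hLinf _⟩
  filter_upwards [hK] with p hp ξ
  rw [one_mul]
  exact sq_add_sq_le_sum_add_diag_mul_mul hp ξ

/-- construction of a symmetric, essentially bounded, distributional
antiderivative tensor `T̃` with `T̃_{αβ,β} = -P_α`, which after adding a large
multiple of the identity becomes uniformly positive definite while still
satisfying `T_{αβ,β} = -P_α`. -/
theorem statement1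
    (Ω : Set (ℝ × ℝ)) (hΩo : IsOpen Ω) (hΩb : Bornology.IsBounded Ω)
    (P : Fin 2 → ℝ × ℝ → ℝ)
    (hPbd : ∀ α, MemLp (P α) ⊤ volume)
    (hPmeas : ∀ α, AEStronglyMeasurable (P α) volume)
    (hPsupp : ∀ α, ∀ x ∉ Ω, P α x = 0)
    (Ttil : Fin 2 → Fin 2 → ℝ × ℝ → ℝ)
    (hT11 : ∀ p : ℝ × ℝ, Ttil 0 0 p = -∫ ξ in (0 : ℝ)..p.1, P 0 (ξ, p.2))
    (hT22 : ∀ p : ℝ × ℝ, Ttil 1 1 p = -∫ ξ in (0 : ℝ)..p.2, P 1 (p.1, ξ))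
    (hT12 : ∀ p : ℝ × ℝ, Ttil 0 1 p = 0)
    (hT21 : ∀ p : ℝ × ℝ, Ttil 1 0 p = 0) :
    -- `T̃` is symmetric
    (∀ α β, ∀ x, Ttil α β x = Ttil β α x) ∧
    -- `T̃` is essentially bounded on `Ω`
    (∀ α β, MemLp (Ttil α β) ⊤ (volume.restrict Ω)) ∧
    -- distributional divergence identity `T̃_{αβ,β} = -P_α` in `Ω`:
    -- `∫_Ω T̃_{αβ} φ_{,β} dx = ∫_Ω P_α φ dx` for all test functions `φ`
    (∀ α, ∀ φ : ℝ × ℝ → ℝ, TestFun Ω φ →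
      (∫ x in Ω, ∑ β, Ttil α β x * pd φ β x) = ∫ x in Ω, P α x * φ x) ∧
    -- a large constant shift makes it uniformly positive definite a.e. in `Ω`,
    -- while the shifted tensor satisfies the same divergence identity
    (∃ C > (0 : ℝ), ∃ c > (0 : ℝ),
      (∀ᵐ x ∂volume.restrict Ω, ∀ ξ : Fin 2 → ℝ,
        c * (ξ 0 ^ 2 + ξ 1 ^ 2) ≤
          ∑ α, ∑ β, (Ttil α β x + (if α = β then C else 0)) * ξ α * ξ β) ∧
      (∀ α, ∀ φ : ℝ × ℝ → ℝ, TestFun Ω φ →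
        (∫ x in Ω, ∑ β, (Ttil α β x + (if α = β then C else 0)) * pd φ β x) =
          ∫ x in Ω, P α x * φ x)) :=
  statement1_general Ω hΩb P hPbd Ttil hT11 hT22 hT12 hT21
end
end

section
/- Let ∂Ω = Γ₀ ∪ Γ_t with m_Γ(Γ₀ ∩ Γ_t) = 0 and m_Γ(Γ₀) > 0, and let T₀ ∈ L²(Ω;ℝ^{2×2}) be symmetric with (T₀)_{αβ,β} + P_α = 0 in Ω and (T₀)_{αβ} n_β = P^t_α on Γ_t (in the weak sense). Then for every u = (u_α, w) ∈ U the decomposition J(u) = J₁(u) + G₁(γ(u)) − ⟨(T₀)_{αβ}, γ_{αβ}(u)⟩_{L²} holds, where J(u) = G₁(γ(u)) + G₂(κ(u)) − ⟨P_α, u_α⟩_{L²(Ω)} − ⟨w, P⟩_{L²(Ω)} − ⟨P^t_α, u_α⟩_{L²(Γ_t)} − ⟨P^t, w⟩_{L²(Γ_t)} and J₁(u) = G₂(κ(u)) + (1/2)⟨(T₀)_{αβ}, w_{,α} w_{,β}⟩_{L²} − ⟨P, w⟩_{L²(Ω)} − ⟨P^t, w⟩_{L²(Γ_t)}. -/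
open MeasureTheory Filter Topology

noncomputable section

/-- Admissible set for the mixed boundary-condition plate:
`u_α = w = ∂w/∂n = 0` on `Γ₀`. -/
def UadMixed (Γ₀ : Set (ℝ × ℝ)) : Set Config :=
  {u | (∀ α, ContDiff ℝ 1 (u.1 α)) ∧ ContDiff ℝ 2 u.2 ∧
       (∀ α, ∀ x ∈ Γ₀, u.1 α x = 0) ∧
       (∀ x ∈ Γ₀, u.2 x = 0) ∧
       (∀ x ∈ Γ₀, fderiv ℝ u.2 x = 0)}

/-!
Testing the weak equilibrium equation of `T₀` with the in-plane displacement `v = (u₁, u₂)`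
turns `⟨T₀, ∇u_α⟩` into the work of the in-plane loads. Since `T₀` is symmetric, pairing it with
the symmetrized gradient in `γ(u)` is the same as pairing it with the gradient, so
`⟨T₀, γ(u)⟩ = ⟨P_α, u_α⟩ + ⟨P^t_α, u_α⟩_{Γ_t} + (1/2)⟨T₀, w_{,α} w_{,β}⟩`, and the decomposition
is then a rearrangement of the terms of `J`.
-/

theorem Bornology.IsBounded.integrable_mul_of_continuous {X : Type*} [MetricSpace X]
    [ProperSpace X] [MeasurableSpace X] [OpensMeasurableSpace X] {μ : Measure X}
    [IsFiniteMeasureOnCompacts μ] {Ω : Set X} (hΩ : Bornology.IsBounded Ω)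
    (hΩm : MeasurableSet Ω) {p : ENNReal} (hp : 1 ≤ p) {f g : X → ℝ}
    (hf : MemLp f p (μ.restrict Ω)) (hg : Continuous g) :
    Integrable (fun x => f x * g x) (μ.restrict Ω) := by
  have : IsFiniteMeasure (μ.restrict Ω) := ⟨by simpa using hΩ.measure_lt_top⟩
  obtain ⟨C, hC⟩ := hΩ.isCompact_closure.exists_bound_of_continuousOn hg.continuousOn
  have hgC : ∀ᵐ x ∂(μ.restrict Ω), ‖g x‖ ≤ C :=
    (ae_restrict_mem hΩm).mono fun x hx => hC x (subset_closure hx)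
  simpa only [mul_comm] using (hf.integrable hp).bdd_mul hg.aestronglyMeasurable hgC

theorem ContDiff.continuous_pd {f : ℝ × ℝ → ℝ} {n : WithTop ℕ∞} (hf : ContDiff ℝ n f)
    (hn : n ≠ 0) (i : Fin 2) : Continuous (pd f i) :=
  (hf.continuous_fderiv hn).clm_apply continuous_const

theorem sum_integral_mul_gam_of_symm {μ : Measure (ℝ × ℝ)} {T : Fin 2 → Fin 2 → ℝ × ℝ → ℝ}
    (hT : ∀ α β x, T α β x = T β α x) (u : Config)
    (hdu : ∀ α β, Integrable (fun x => T α β x * pd (u.1 α) β x) μ)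
    (hdw : ∀ α β, Integrable (fun x => T α β x * pd u.2 α x * pd u.2 β x) μ) :
    ∑ α, ∑ β, ∫ x, T α β x * gam u α β x ∂μ =
      ∑ α, ∑ β, ∫ x, T α β x * pd (u.1 α) β x ∂μ
        + (1 / 2) * ∑ α, ∑ β, ∫ x, T α β x * pd u.2 α x * pd u.2 β x ∂μ := by
  have hsplit : ∀ α β, ∫ x, T α β x * gam u α β x ∂μ =
      (1 / 2) * ∫ x, T α β x * pd (u.1 α) β x ∂μ
        + (1 / 2) * ∫ x, T β α x * pd (u.1 β) α x ∂μ
        + (1 / 2) * ∫ x, T α β x * pd u.2 α x * pd u.2 β x ∂μ := by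
    intro α β
    have hpoint : (fun x => T α β x * gam u α β x) = fun x =>
        (1 / 2) * (T α β x * pd (u.1 α) β x) + (1 / 2) * (T β α x * pd (u.1 β) α x)
          + (1 / 2) * (T α β x * pd u.2 α x * pd u.2 β x) := by
      funext x
      rw [gam, hT β α x]
      ring
    rw [hpoint, integral_add ?_ ((hdw α β).const_mul _),
      integral_add ((hdu α β).const_mul _) ((hdu β α).const_mul _),
      integral_const_mul, integral_const_mul, integral_const_mul]
    exact ((hdu α β).const_mul _).add ((hdu β α).const_mul _)
  simp only [hsplit, Finset.sum_add_distrib, ← Finset.mul_sum]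
  rw [Finset.sum_comm (f := fun α β => ∫ x, T β α x * pd (u.1 β) α x ∂μ)]
  ring

theorem statement5_general
    (Ω : Set (ℝ × ℝ)) (hΩo : IsOpen Ω) (hΩb : Bornology.IsBounded Ω)
    (σ : Measure (ℝ × ℝ)) -- the boundary (Lebesgue surface) measure `m_Γ` on `∂Ω`
    (Γ₀ Γt : Set (ℝ × ℝ))
    (H : Tensor4) (hth : ℝ)
    (P : Fin 2 → ℝ × ℝ → ℝ)
    (P3 : ℝ × ℝ → ℝ)
    (Pt : Fin 2 → ℝ × ℝ → ℝ)
    (Pt3 : ℝ × ℝ → ℝ)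
    -- `T₀`: symmetric, square integrable, in weak equilibrium
    (T₀ : Fin 2 → Fin 2 → ℝ × ℝ → ℝ)
    (hT₀sym : ∀ α β x, T₀ α β x = T₀ β α x)
    (hT₀L2 : L2mat Ω T₀)
    (hT₀eq : ∀ v : Fin 2 → ℝ × ℝ → ℝ, (∀ α, ContDiff ℝ 1 (v α)) →
      (∀ α, ∀ x ∈ Γ₀, v α x = 0) →
      (∑ α, ∑ β, ∫ x in Ω, T₀ α β x * pd (v α) β x) =
        (∑ α, ∫ x in Ω, P α x * v α x) + ∑ α, ∫ x in Γt, Pt α x * v α x ∂σ)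
    -- the functionals `J` and `J₁`
    (J J₁ : Config → ℝ)
    (hJ : ∀ u, J u =
      G1 H Ω u + G2 (fun α β l m => hth ^ 2 / 12 * H α β l m) Ω u
        - (∑ α, ∫ x in Ω, P α x * u.1 α x) - (∫ x in Ω, u.2 x * P3 x)
        - (∑ α, ∫ x in Γt, Pt α x * u.1 α x ∂σ) - ∫ x in Γt, Pt3 x * u.2 x ∂σ)
    (hJ₁ : ∀ u, J₁ u =
      G2 (fun α β l m => hth ^ 2 / 12 * H α β l m) Ω u
        + (1 / 2) * (∑ α, ∑ β, ∫ x in Ω, T₀ α β x * pd u.2 α x * pd u.2 β x)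
        - (∫ x in Ω, P3 x * u.2 x) - ∫ x in Γt, Pt3 x * u.2 x ∂σ) :
    ∀ u ∈ UadMixed Γ₀,
      J u = J₁ u + G1 H Ω u - ∑ α, ∑ β, ∫ x in Ω, T₀ α β x * gam u α β x := by
  rintro u ⟨hu, hw, hu_Γ₀, -, -⟩
  have hint : ∀ α β (g : ℝ × ℝ → ℝ), Continuous g →
      Integrable (fun x => T₀ α β x * g x) (volume.restrict Ω) := fun α β _ hg =>
    hΩb.integrable_mul_of_continuous hΩo.measurableSet one_le_two (hT₀L2 α β) hg
  have hγ := sum_integral_mul_gam_of_symm hT₀sym u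
    (fun α β => hint α β _ ((hu α).continuous_pd one_ne_zero β))
    (fun α β => by
      simpa only [mul_assoc] using hint α β (fun x => pd u.2 α x * pd u.2 β x)
        ((hw.continuous_pd two_ne_zero α).mul (hw.continuous_pd two_ne_zero β)))
  rw [hJ, hJ₁, hγ, hT₀eq u.1 hu hu_Γ₀]
  simp only [mul_comm (u.2 _) (P3 _)]
  ring

/-- the decomposition `J(u) = J₁(u) + G₁(γ(u)) - ⟨(T₀)_{αβ}, γ_{αβ}(u)⟩`
for every admissible `u`, where `T₀` is a symmetric `L²` tensor field in weak
equilibrium with the loads `P_α, P^t_α`. -/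
theorem statement5
    (Ω : Set (ℝ × ℝ)) (hΩo : IsOpen Ω) (hΩb : Bornology.IsBounded Ω) (hΩc : IsConnected Ω)
    (σ : Measure (ℝ × ℝ)) -- the boundary (Lebesgue surface) measure `m_Γ` on `∂Ω`
    (Γ₀ Γt : Set (ℝ × ℝ))
    (hΓ : Γ₀ ∪ Γt = frontier Ω) (hΓcap : σ (Γ₀ ∩ Γt) = 0) (hΓ0 : 0 < σ Γ₀)
    (H : Tensor4) (hH : SymPosDef H) (hth : ℝ) (hthpos : 0 < hth)
    (P : Fin 2 → ℝ × ℝ → ℝ) (hP : ∀ α, MemLp (P α) 2 (volume.restrict Ω))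
    (P3 : ℝ × ℝ → ℝ) (hP3 : MemLp P3 2 (volume.restrict Ω))
    (Pt : Fin 2 → ℝ × ℝ → ℝ) (hPt : ∀ α, MemLp (Pt α) 2 (σ.restrict Γt))
    (Pt3 : ℝ × ℝ → ℝ) (hPt3 : MemLp Pt3 2 (σ.restrict Γt))
    -- `T₀`: symmetric, square integrable, in weak equilibrium
    (T₀ : Fin 2 → Fin 2 → ℝ × ℝ → ℝ)
    (hT₀sym : ∀ α β x, T₀ α β x = T₀ β α x)
    (hT₀L2 : L2mat Ω T₀)
    (hT₀eq : ∀ v : Fin 2 → ℝ × ℝ → ℝ, (∀ α, ContDiff ℝ 1 (v α)) →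
      (∀ α, ∀ x ∈ Γ₀, v α x = 0) →
      (∑ α, ∑ β, ∫ x in Ω, T₀ α β x * pd (v α) β x) =
        (∑ α, ∫ x in Ω, P α x * v α x) + ∑ α, ∫ x in Γt, Pt α x * v α x ∂σ)
    -- the functionals `J` and `J₁`
    (J J₁ : Config → ℝ)
    (hJ : ∀ u, J u =
      G1 H Ω u + G2 (fun α β l m => hth ^ 2 / 12 * H α β l m) Ω u
        - (∑ α, ∫ x in Ω, P α x * u.1 α x) - (∫ x in Ω, u.2 x * P3 x)
        - (∑ α, ∫ x in Γt, Pt α x * u.1 α x ∂σ) - ∫ x in Γt, Pt3 x * u.2 x ∂σ)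
    (hJ₁ : ∀ u, J₁ u =
      G2 (fun α β l m => hth ^ 2 / 12 * H α β l m) Ω u
        + (1 / 2) * (∑ α, ∑ β, ∫ x in Ω, T₀ α β x * pd u.2 α x * pd u.2 β x)
        - (∫ x in Ω, P3 x * u.2 x) - ∫ x in Γt, Pt3 x * u.2 x ∂σ) :
    ∀ u ∈ UadMixed Γ₀,
      J u = J₁ u + G1 H Ω u - ∑ α, ∑ β, ∫ x in Ω, T₀ α β x * gam u α β x :=
  statement5_general Ω hΩo hΩb σ Γ₀ Γt H hth P P3 Pt Pt3 T₀ hT₀sym hT₀L2 hT₀eq J J₁ hJ hJ₁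
end
end
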